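/- arXiv:1107.2665 — 3 statements merged into one kernel-verified Lean document; each statement's English description precedes it below -/
import Mathlib

section
/- Let f_M ≥ 0 and f⁰ > 2·f_M be real numbers. Suppose x, y : ℝ → ℂ are continuous, integrable functions whose Fourier transforms vanish at every frequency f' with |f'| > f_M. If x(n/f⁰) = y(n/f⁰) for every integer n, then x = y. (A band-limited signal is uniquely determined by its discrete samples taken at any rate exceeding twice its bandwidth.) -/
/-!
If the spectrum of a signal lies in an open interval of length `T`, the `T`-periodic extension of
its Fourier transform is continuous, and by Fourier inversion its `n`-th Fourier coefficient is
`T⁻¹` times the sample at `-n / T`. Two signals with the same samples therefore have periodized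
spectra with the same Fourier coefficients; these are continuous functions on the circle, so they
agree, hence so do the spectra and, by inversion again, the signals. A sampling rate `f⁰ > 2 f_M`
is exactly what lets `[-f_M, f_M]` fit into the open interval `(-f⁰/2, f⁰/2)` of length `f⁰`.
-/

open MeasureTheory FourierTransform Set

namespace AddCircle

variable {T : ℝ} [Fact (0 < T)]

theorem fourierCoeff_liftIco_eq_fourierInv {a : ℝ} {Z : ℝ → ℂ}
    (hZ : ∀ ξ ∉ Ioc a (a + T), Z ξ = 0) (n : ℤ) :
    fourierCoeff (liftIco T a Z) n = T⁻¹ • 𝓕⁻ Z (-n / T) := by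
  have hT : (0 : ℝ) < T := Fact.out
  rw [fourierCoeff_liftIco_eq, fourierCoeffOn_eq_integral, add_sub_cancel_left, one_div,
    intervalIntegral.integral_of_le (by linarith),
    setIntegral_eq_integral_of_forall_compl_eq_zero (fun ξ hξ => by rw [hZ ξ hξ, smul_zero]),
    Real.fourierInv_eq']
  congr 2 with ξ
  rw [fourier_coe_apply, RCLike.inner_apply, conj_trivial]
  congr 2
  push_cast
  field_simp

theorem eq_of_fourierCoeff_eq {f g : AddCircle T → ℂ} (hf : Continuous f) (hg : Continuous g)
    (h : ∀ n, fourierCoeff f n = fourierCoeff g n) : f = g := by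
  have hLp : ContinuousMap.toLp (E := ℂ) 2 haarAddCircle ℂ ⟨f, hf⟩ =
      ContinuousMap.toLp (E := ℂ) 2 haarAddCircle ℂ ⟨g, hg⟩ :=
    fourierBasis.repr.injective <| lp.ext <| funext fun n => by
      simp only [fourierBasis_repr, fourierCoeff_toLp]
      exact h n
  exact congrArg DFunLike.coe (ContinuousMap.toLp_injective haarAddCircle hLp)

end AddCircle

namespace MeasureTheory.Integrable

variable {V E : Type*} [NormedAddCommGroup V] [InnerProductSpace ℝ V] [MeasurableSpace V]
  [BorelSpace V] [FiniteDimensional ℝ V] [NormedAddCommGroup E] [NormedSpace ℂ E] {f : V → E}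

theorem continuous_fourier (hf : Integrable f) : Continuous (𝓕 f) :=
  VectorFourier.fourierIntegral_continuous Real.continuous_fourierChar continuous_inner hf

theorem integrable_fourier_of_isBounded {s : Set V} (hf : Integrable f)
    (hs : Bornology.IsBounded s) (hfs : ∀ ξ ∉ s, 𝓕 f ξ = 0) : Integrable (𝓕 f) :=
  hf.continuous_fourier.integrable_of_hasCompactSupport
    (.intro hs.isCompact_closure fun ξ hξ => hfs ξ fun h => hξ (subset_closure h))

end MeasureTheory.Integrable

section BandLimited

variable {T a : ℝ} [Fact (0 < T)] {x : ℝ → ℂ}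

theorem continuous_liftIco_fourier (hxi : Integrable x)
    (hx : ∀ ξ ∉ Ioo a (a + T), 𝓕 x ξ = 0) :
    Continuous (AddCircle.liftIco T a (𝓕 x)) :=
  AddCircle.liftIco_continuous (by rw [hx a (by simp), hx (a + T) (by simp)])
    hxi.continuous_fourier.continuousOn

theorem fourierCoeff_liftIco_fourier (hxc : Continuous x) (hxi : Integrable x)
    (hx : ∀ ξ ∉ Ioo a (a + T), 𝓕 x ξ = 0) (n : ℤ) :
    fourierCoeff (AddCircle.liftIco T a (𝓕 x)) n = T⁻¹ • x (-n / T) := by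
  rw [AddCircle.fourierCoeff_liftIco_eq_fourierInv
      (fun ξ hξ => hx ξ fun h => hξ (Ioo_subset_Ioc_self h)),
    hxc.fourierInv_fourier_eq hxi
      (hxi.integrable_fourier_of_isBounded (Metric.isBounded_Ioo _ _) hx)]

theorem eq_of_samples_eq_of_fourier_eq_zero_off_Ioo {y : ℝ → ℂ}
    (hxc : Continuous x) (hyc : Continuous y) (hxi : Integrable x) (hyi : Integrable y)
    (hx : ∀ ξ ∉ Ioo a (a + T), 𝓕 x ξ = 0) (hy : ∀ ξ ∉ Ioo a (a + T), 𝓕 y ξ = 0)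
    (hsamp : ∀ n : ℤ, x (n / T) = y (n / T)) : x = y := by
  have hlift : AddCircle.liftIco T a (𝓕 x) = AddCircle.liftIco T a (𝓕 y) :=
    AddCircle.eq_of_fourierCoeff_eq (continuous_liftIco_fourier hxi hx)
      (continuous_liftIco_fourier hyi hy) fun n => by
        rw [fourierCoeff_liftIco_fourier hxc hxi hx, fourierCoeff_liftIco_fourier hyc hyi hy,
          ← Int.cast_neg, hsamp]
  have hfourier : 𝓕 x = 𝓕 y := funext fun ξ => by
    by_cases hξ : ξ ∈ Ioo a (a + T)
    · have := congrFun hlift ξ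
      rwa [AddCircle.liftIco_coe_apply (Ioo_subset_Ico_self hξ),
        AddCircle.liftIco_coe_apply (Ioo_subset_Ico_self hξ)] at this
    · rw [hx ξ hξ, hy ξ hξ]
  rw [← hxc.fourierInv_fourier_eq hxi
      (hxi.integrable_fourier_of_isBounded (Metric.isBounded_Ioo _ _) hx),
    ← hyc.fourierInv_fourier_eq hyi
      (hyi.integrable_fourier_of_isBounded (Metric.isBounded_Ioo _ _) hy),
    hfourier]

end BandLimited

/-- A band-limited signal is uniquely determined by its discrete samples taken
at any rate exceeding twice its bandwidth (Nyquist–Shannon sampling theorem). -/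
theorem sampling_theorem
    (fM f0 : ℝ) (hfM : 0 ≤ fM) (hf0 : 2 * fM < f0)
    (x y : ℝ → ℂ)
    (hxc : Continuous x) (hyc : Continuous y)
    (hxi : Integrable x) (hyi : Integrable y)
    (hxb : ∀ f' : ℝ, |f'| > fM → FourierTransform.fourier x f' = 0)
    (hyb : ∀ f' : ℝ, |f'| > fM → FourierTransform.fourier y f' = 0)
    (hsamp : ∀ n : ℤ, x ((n : ℝ) / f0) = y ((n : ℝ) / f0)) :
    x = y := by
  have : Fact (0 < f0) := ⟨by linarith⟩
  have hband : ∀ ξ ∉ Ioo (-(f0 / 2)) (-(f0 / 2) + f0), |ξ| > fM := fun ξ hξ => by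
    by_contra! hle
    exact hξ ⟨by linarith [neg_abs_le ξ], by linarith [le_abs_self ξ]⟩
  exact eq_of_samples_eq_of_fourier_eq_zero_off_Ioo hxc hyc hxi hyi
    (fun ξ hξ => hxb ξ (hband ξ hξ)) (fun ξ hξ => hyb ξ (hband ξ hξ)) hsamp
end

section
/- Let t_M > 0 and let Δf be a real number with 0 < Δf < 1/(2·t_M). Suppose x, y : ℝ → ℂ are integrable functions that vanish at every time t' with |t'| > t_M. If 𝓕x(n·Δf) = 𝓕y(n·Δf) for every integer n, then 𝓕x(f) = 𝓕y(f) for every real f (equivalently, x = y almost everywhere). (The Fourier transform of a compactly supported signal is uniquely determined by its values on the discrete frequency grid n·Δf provided Δf < 1/(2·t_M).) -/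
open MeasureTheory

/-!
Put `T = 1 / Δf`, so that `2 * tM < T`. For integrable `x`, `G ↦ ∫ G (t mod T) • x t` is a
continuous linear functional on `C(AddCircle T, ℂ)` whose value at the character `fourier n`
is `𝓕 x (-n / T)`; since trigonometric polynomials are dense, the grid values determine it.
Because the support of `x` has length `2 * tM < T`, the character `t ↦ exp (-2πi f t)` on
`[-tM, tM]` extends to a continuous `T`-periodic function `G`, and `𝓕 x f` is the functional
evaluated at `G`.
-/

open Set Real FourierTransform

namespace AddCircle

variable {T : ℝ} [Fact (0 < T)]

theorem continuousLinearMap_ext_fourier {E : Type*} [TopologicalSpace E] [AddCommMonoid E]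
    [Module ℂ E] [T2Space E] {L₁ L₂ : C(AddCircle T, ℂ) →L[ℂ] E}
    (h : ∀ n, L₁ (fourier n) = L₂ (fourier n)) : L₁ = L₂ :=
  ContinuousLinearMap.ext_on
    (Submodule.dense_iff_topologicalClosure_eq_top.mpr span_fourier_closure_eq_top)
    (by rintro - ⟨n, rfl⟩; exact h n)

theorem exists_continuousMap_eqOn_Icc {E : Type*} [TopologicalSpace E] [AddCommGroup E]
    [Module ℝ E] [ContinuousSMul ℝ E] {r : ℝ} (hrT : 2 * r < T) {g : ℝ → E}
    (hg : Continuous g) : ∃ G : C(AddCircle T, E), ∀ t ∈ Icc (-r) r, G t = g t := by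
  set c := T / 2 with hc
  obtain ⟨ψ, hψ0, hψ1, -⟩ := exists_continuous_zero_one_of_isClosed
    ((finite_singleton c).insert (-c)).isClosed (isClosed_Icc (a := -r) (b := r))
    (disjoint_iff_forall_ne.mpr <| by
      rintro a (rfl | rfl) b ⟨h₁, h₂⟩ rfl <;> linarith)
  have hψg : Continuous fun t => ψ t • g t := ψ.continuous.smul hg
  have hcT : -c + T = c := by ring
  refine ⟨⟨liftIco T (-c) fun t => ψ t • g t, liftIco_continuous ?_ hψg.continuousOn⟩,
    fun t ht => ?_⟩
  · rw [hcT, hψ0 (by simp), hψ0 (by simp)]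
    simp only [Pi.zero_apply, zero_smul]
  · have hmem : t ∈ Ico (-c) (-c + T) := by
      rw [hcT]; constructor <;> linarith [ht.1, ht.2]
    simp [liftIco_coe_apply hmem, hψ1 ht]

end AddCircle

section

variable {E : Type*} [NormedAddCommGroup E] [NormedSpace ℂ E]
  {T : ℝ} [Fact (0 < T)] {μ : Measure ℝ} {x y : ℝ → E}

theorem MeasureTheory.Integrable.addCircle_continuousMap_smul (hx : Integrable x μ)
    (G : C(AddCircle T, ℂ)) : Integrable (fun t : ℝ => G t • x t) μ :=
  hx.bdd_smul ‖G‖ (G.continuous.comp (AddCircle.continuous_mk' T)).aestronglyMeasurable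
    (ae_of_all _ fun t => G.norm_coe_le_norm t)

variable (T) in
noncomputable def periodicIntegralCLM (hx : Integrable x μ) : C(AddCircle T, ℂ) →L[ℂ] E :=
  LinearMap.mkContinuous
    { toFun := fun G => ∫ t : ℝ, G t • x t ∂μ
      map_add' := fun G H => by
        simp only [ContinuousMap.add_apply, add_smul]
        exact integral_add (hx.addCircle_continuousMap_smul G) (hx.addCircle_continuousMap_smul H)
      map_smul' := fun c G => by
        simp only [ContinuousMap.smul_apply, smul_eq_mul, mul_smul, RingHom.id_apply]
        exact integral_smul c _ }
    (∫ t, ‖x t‖ ∂μ) fun G => by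
      rw [mul_comm, ← integral_const_mul]
      refine norm_integral_le_of_norm_le (hx.norm.const_mul _) (ae_of_all _ fun t => ?_)
      rw [norm_smul]
      exact mul_le_mul_of_nonneg_right (G.norm_coe_le_norm t) (norm_nonneg _)

theorem periodicIntegralCLM_apply (hx : Integrable x μ) (G : C(AddCircle T, ℂ)) :
    periodicIntegralCLM T hx G = ∫ t : ℝ, G t • x t ∂μ := rfl

theorem periodicIntegralCLM_fourier (hx : Integrable x) (n : ℤ) :
    periodicIntegralCLM T hx (fourier n) = 𝓕 x (-n / T) := by
  rw [periodicIntegralCLM_apply, Real.fourier_real_eq_integral_exp_smul]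
  congr 1 with t
  rw [fourier_coe_apply]
  push_cast
  ring_nf

theorem fourier_eq_periodicIntegralCLM {r f : ℝ} (hx : Integrable x)
    (hxr : ∀ t, r < |t| → x t = 0) {G : C(AddCircle T, ℂ)}
    (hG : ∀ t ∈ Icc (-r) r, G t = Complex.exp (↑(-2 * π * t * f) * Complex.I)) :
    𝓕 x f = periodicIntegralCLM T hx G := by
  rw [periodicIntegralCLM_apply, Real.fourier_real_eq_integral_exp_smul]
  congr 1 with t
  rcases le_or_gt |t| r with ht | ht
  · rw [hG t (abs_le.mp ht)]
  · simp [hxr t ht]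

theorem fourier_eq_of_fourier_eq_on_grid {r : ℝ} (hrT : 2 * r < T) (hx : Integrable x)
    (hy : Integrable y) (hxr : ∀ t, r < |t| → x t = 0) (hyr : ∀ t, r < |t| → y t = 0)
    (hgrid : ∀ n : ℤ, 𝓕 x (n / T) = 𝓕 y (n / T)) : 𝓕 x = 𝓕 y := by
  have hxy : periodicIntegralCLM T hx = periodicIntegralCLM T hy :=
    AddCircle.continuousLinearMap_ext_fourier fun n => by
      simpa [periodicIntegralCLM_fourier, neg_div] using hgrid (-n)
  ext f
  obtain ⟨G, hG⟩ := AddCircle.exists_continuousMap_eqOn_Icc (T := T) hrT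
    (g := fun t => Complex.exp (↑(-2 * π * t * f) * Complex.I)) (by fun_prop)
  rw [fourier_eq_periodicIntegralCLM hx hxr hG, fourier_eq_periodicIntegralCLM hy hyr hG, hxy]

end

/-- The Fourier transform of a compactly supported signal is uniquely determined
by its values on the discrete frequency grid `n·Δf`, provided `Δf < 1/(2·t_M)`. -/
theorem fourier_determined_by_discrete_frequencies
    (tM Δf : ℝ) (htM : 0 < tM) (hΔf : 0 < Δf) (hΔf' : Δf < 1 / (2 * tM))
    (x y : ℝ → ℂ)
    (hxi : Integrable x) (hyi : Integrable y)
    (hx : ∀ t' : ℝ, |t'| > tM → x t' = 0)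
    (hy : ∀ t' : ℝ, |t'| > tM → y t' = 0)
    (hgrid : ∀ n : ℤ,
      FourierTransform.fourier x ((n : ℝ) * Δf) = FourierTransform.fourier y ((n : ℝ) * Δf)) :
    ∀ f : ℝ, FourierTransform.fourier x f = FourierTransform.fourier y f := by
  have : Fact (0 < Δf⁻¹) := ⟨inv_pos.mpr hΔf⟩
  have hT : 2 * tM < Δf⁻¹ := by
    rwa [← one_div, lt_one_div (by positivity) hΔf]
  refine congrFun (fourier_eq_of_fourier_eq_on_grid hT hxi hyi hx hy fun n => ?_)
  simpa [div_inv_eq_mul] using hgrid n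
end

section
/- Fix a real number f⁰ > 0 (the sample rate) and a natural number L ≥ 1 (the latency in samples). For natural numbers M ≥ 1 (templates) and N ≥ 2 (template length), define the overlap-save frequency-domain filtering cost with FFT block size D = N + L as C(M, N) := f⁰ · (2·(M+1)·log₂(N+L) + 2·M) / (1 − N/(N+L)), and define the approximation A(M, N) := (1 + N/L) · (2·f⁰·M·log₂ N). Then C(M, N)/A(M, N) → 1 as M → ∞ and N → ∞ (i.e., the limit along the product filter atTop ×ˢ atTop on ℕ × ℕ is 1). (In the limit of many templates and long templates, the computational cost of low-latency frequency-domain convolution scales as (1 + template length/latency)·(2·f⁰·M·log₂ N), growing rapidly as the latency decreases.) -/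
open Filter Topology Real

noncomputable def overlapSaveCost (f0 L M N : ℝ) : ℝ :=
  f0 * (2 * (M + 1) * logb 2 (N + L) + 2 * M) / (1 - N / (N + L))

noncomputable def overlapSaveCostApprox (f0 L M N : ℝ) : ℝ :=
  (1 + N / L) * (2 * f0 * M * logb 2 N)

theorem Real.tendsto_log_add_div_log_atTop (c : ℝ) :
    Tendsto (fun x => log (x + c) / log x) atTop (𝓝 1) := by
  have h : Tendsto (fun x => 1 + (log (x + c) - log x) / log x) atTop (𝓝 (1 + 0)) :=
    tendsto_const_nhds.add ((tendsto_log_comp_add_sub_log c).div_atTop tendsto_log_atTop)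
  rw [add_zero] at h
  refine h.congr' ?_
  filter_upwards [eventually_gt_atTop 1] with x hx
  have := (log_pos hx).ne'
  field_simp
  ring

theorem Real.tendsto_logb_add_div_logb_atTop {b : ℝ} (hb : log b ≠ 0) (c : ℝ) :
    Tendsto (fun x => logb b (x + c) / logb b x) atTop (𝓝 1) := by
  simpa only [logb, div_div_div_cancel_right₀ hb] using tendsto_log_add_div_log_atTop c

/-- The factor `1 - N / (N + L) = L / (N + L)` of the cost cancels against `1 + N / L`. -/
theorem overlapSaveCost_div_approx {f0 L M N : ℝ} (hf0 : f0 ≠ 0) (hL : 0 < L) (hM : M ≠ 0)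
    (hN : 1 < N) :
    overlapSaveCost f0 L M N / overlapSaveCostApprox f0 L M N =
      (1 + M⁻¹) * (logb 2 (N + L) / logb 2 N) + (logb 2 N)⁻¹ := by
  have hlogN : logb 2 N ≠ 0 := (logb_pos one_lt_two hN).ne'
  have hNL : N + L ≠ 0 := by linarith
  have hden : 1 - N / (N + L) = L / (N + L) := by field_simp; ring
  rw [overlapSaveCost, overlapSaveCostApprox, hden]
  field_simp
  ring

/-- In the limit of many templates and long templates, the computational cost of
low-latency overlap-save frequency-domain convolution (with FFT block size
`D = N + L`, giving a latency of `L` samples) scales as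
`(1 + template length/latency)·(2·f⁰·M·log₂ N)`. -/
theorem overlap_save_low_latency_cost_asymptotics
    (f0 : ℝ) (hf0 : 0 < f0) (L : ℕ) (hL : 1 ≤ L) :
    Tendsto
      (fun p : ℕ × ℕ =>
        (f0 * (2 * ((p.1 : ℝ) + 1) * Real.logb 2 ((p.2 : ℝ) + (L : ℝ)) + 2 * (p.1 : ℝ)) /
            (1 - (p.2 : ℝ) / ((p.2 : ℝ) + (L : ℝ)))) /
          ((1 + (p.2 : ℝ) / (L : ℝ)) * (2 * f0 * (p.1 : ℝ) * Real.logb 2 (p.2 : ℝ))))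
      (atTop ×ˢ atTop) (nhds 1) := by
  change Tendsto (fun p : ℕ × ℕ =>
    overlapSaveCost f0 L p.1 p.2 / overlapSaveCostApprox f0 L p.1 p.2) _ _
  have hM : Tendsto (fun p : ℕ × ℕ => (p.1 : ℝ)) (atTop ×ˢ atTop) atTop :=
    tendsto_natCast_atTop_atTop.comp tendsto_fst
  have hN : Tendsto (fun p : ℕ × ℕ => (p.2 : ℝ)) (atTop ×ˢ atTop) atTop :=
    tendsto_natCast_atTop_atTop.comp tendsto_snd
  have hlim : Tendsto (fun p : ℕ × ℕ =>
      (1 + (p.1 : ℝ)⁻¹) * (logb 2 (p.2 + L) / logb 2 p.2) + (logb 2 p.2)⁻¹)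
      (atTop ×ˢ atTop) (𝓝 ((1 + 0) * 1 + 0)) :=
    ((tendsto_const_nhds.add hM.inv_tendsto_atTop).mul
      ((tendsto_logb_add_div_logb_atTop (log_pos one_lt_two).ne' L).comp hN)).add
      ((tendsto_logb_atTop one_lt_two).comp hN).inv_tendsto_atTop
  rw [add_zero, mul_one, add_zero] at hlim
  refine hlim.congr' ?_
  filter_upwards [hM.eventually_ne_atTop 0, hN.eventually_gt_atTop 1] with p hp1 hp2
  exact (overlapSaveCost_div_approx hf0.ne' (by exact_mod_cast hL) hp1 hp2).symm
end
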